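/- The family H_1 satisfies the cofacial identities of a (corepresented) simplicial homotopy: for all applicable n, i, j one has (i) if i < j then H_1^{j,n} ∘ (δ^i×δ^i) = (δ^i×δ^i) ∘ H_1^{j−1,n−1}; (ii) if i = j ≠ 0 then H_1^{i,n} ∘ (δ^i×δ^i) = H_1^{i−1,n} ∘ (δ^i×δ^i); (iii) if i > j+1 then H_1^{j,n} ∘ (δ^i×δ^i) = (δ^{i−1}×δ^{i−1}) ∘ H_1^{j,n−1}, as maps [n]×[n] → [n]×[n]. -/
import Mathlib


/-- The map `H_1^{i,n} : [n+1]×[n+1] → [n]×[n]` given by `(j,k) ↦ (j,k)` if `j,k ≤ i`;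
`(j−1,j−1)` if `j > i` and `j ≥ k`; `(j,k−1)` if `k > i ≥ j`; and `(j−1,k−1)` if
`k > j > i`. -/
def H1 (n : ℕ) (i : Fin (n + 1)) (p : Fin (n + 2) × Fin (n + 2)) :
    Fin (n + 1) × Fin (n + 1) :=
  if h1 : (p.1 : ℕ) ≤ (i : ℕ) then
    (⟨(p.1 : ℕ), lt_of_le_of_lt h1 i.isLt⟩,
      if h2 : (p.2 : ℕ) ≤ (i : ℕ) then ⟨(p.2 : ℕ), lt_of_le_of_lt h2 i.isLt⟩
      else ⟨(p.2 : ℕ) - 1, by have := p.2.isLt; omega⟩)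
  else
    if h2 : (p.2 : ℕ) ≤ (p.1 : ℕ) then
      (⟨(p.1 : ℕ) - 1, by have := p.1.isLt; omega⟩,
        ⟨(p.1 : ℕ) - 1, by have := p.1.isLt; omega⟩)
    else
      (⟨(p.1 : ℕ) - 1, by have := p.1.isLt; omega⟩,
        ⟨(p.2 : ℕ) - 1, by have := p.2.isLt; omega⟩)

lemma succAbove_coe {n : ℕ} (i : Fin (n + 1)) (j : Fin n) :
    ((i.succAbove j : Fin (n + 1)) : ℕ) = if (j : ℕ) < (i : ℕ) then (j : ℕ) else (j : ℕ) + 1 := by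
  rw [Fin.succAbove]
  split_ifs with h h' h' <;> simp_all [Fin.lt_def]

lemma H1_fst (n : ℕ) (i : Fin (n + 1)) (p : Fin (n + 2) × Fin (n + 2)) :
    ((H1 n i p).1 : ℕ) = if (p.1 : ℕ) ≤ (i : ℕ) then (p.1 : ℕ) else (p.1 : ℕ) - 1 := by
  rw [H1]; split_ifs <;> rfl

lemma H1_snd (n : ℕ) (i : Fin (n + 1)) (p : Fin (n + 2) × Fin (n + 2)) :
    ((H1 n i p).2 : ℕ) =
      if (p.1 : ℕ) ≤ (i : ℕ) then
        (if (p.2 : ℕ) ≤ (i : ℕ) then (p.2 : ℕ) else (p.2 : ℕ) - 1)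
      else (if (p.2 : ℕ) ≤ (p.1 : ℕ) then (p.1 : ℕ) - 1 else (p.2 : ℕ) - 1) := by
  rw [H1]; split_ifs <;> rfl

set_option maxHeartbeats 2000000 in
/-- **Cofacial identities of the (corepresented) simplicial homotopy `H_1`.**
Here `δ^i = Fin.succAbove i`.  For all applicable `n`, `i`, `j`:
(i) if `i < j` then `H_1^{j,n} ∘ (δ^i×δ^i) = (δ^i×δ^i) ∘ H_1^{j−1,n−1}`;
(ii) if `i = j ≠ 0` then `H_1^{i,n} ∘ (δ^i×δ^i) = H_1^{i−1,n} ∘ (δ^i×δ^i)`;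
(iii) if `i > j+1` then `H_1^{j,n} ∘ (δ^i×δ^i) = (δ^{i−1}×δ^{i−1}) ∘ H_1^{j,n−1}`,
as maps `[n]×[n] → [n]×[n]` (with `n` replaced by `n+1` in (i) and (iii) so that
`n−1` is a natural number). -/
theorem H1_cofacial_identities :
    (∀ (n i j : ℕ) (hij : i < j) (hj : j ≤ n + 1),
      H1 (n + 1) ⟨j, by omega⟩ ∘
          Prod.map (Fin.succAbove (⟨i, by omega⟩ : Fin (n + 3)))
            (Fin.succAbove (⟨i, by omega⟩ : Fin (n + 3)))
        = Prod.map (Fin.succAbove (⟨i, by omega⟩ : Fin (n + 2)))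
              (Fin.succAbove (⟨i, by omega⟩ : Fin (n + 2))) ∘
            H1 n ⟨j - 1, by omega⟩) ∧
    (∀ (n i : ℕ) (hi0 : i ≠ 0) (hi : i ≤ n),
      H1 n ⟨i, by omega⟩ ∘
          Prod.map (Fin.succAbove (⟨i, by omega⟩ : Fin (n + 2)))
            (Fin.succAbove (⟨i, by omega⟩ : Fin (n + 2)))
        = H1 n ⟨i - 1, by omega⟩ ∘
            Prod.map (Fin.succAbove (⟨i, by omega⟩ : Fin (n + 2)))
              (Fin.succAbove (⟨i, by omega⟩ : Fin (n + 2)))) ∧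
    (∀ (n i j : ℕ) (hij : j + 1 < i) (hi : i ≤ n + 2) (hj : j ≤ n),
      H1 (n + 1) ⟨j, by omega⟩ ∘
          Prod.map (Fin.succAbove (⟨i, by omega⟩ : Fin (n + 3)))
            (Fin.succAbove (⟨i, by omega⟩ : Fin (n + 3)))
        = Prod.map (Fin.succAbove (⟨i - 1, by omega⟩ : Fin (n + 2)))
              (Fin.succAbove (⟨i - 1, by omega⟩ : Fin (n + 2))) ∘
            H1 n ⟨j, by omega⟩) := by
  refine ⟨fun n i j hij hj => ?_, fun n i hi0 hi => ?_, fun n i j hij hi hj => ?_⟩ <;>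
  · funext p
    obtain ⟨⟨a, ha⟩, ⟨b, hb⟩⟩ := p
    simp only [Function.comp_apply, Prod.map_apply, Prod.ext_iff, Prod.map_fst,
      Prod.map_snd, Fin.ext_iff, H1_fst, H1_snd, succAbove_coe]
    constructor <;> · split_ifs <;> omega
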